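/- For every i ∈ I, the operators e_i and f_i on V₁ are nilpotent with e_i⁴ = 0 and f_i⁴ = 0. -/

import Mathlib

open scoped RealInnerProductSpace

/-- A finite, reduced, irreducible, crystallographic root system `R` spanning a
finite-dimensional real inner product space `E`, together with a base of simple
roots indexed by `I`, the integral Cartan pairing `pair`, and for each simple
root `αᵢ` and each root `α` not proportional to `αᵢ` the chain lengths
`p i α`, `q i α` (largest `n ≥ 0` with `α + n αᵢ`, resp. `α - n αᵢ`, a root). -/
structure RootSystemData (E : Type) [NormedAddCommGroup E] [InnerProductSpace ℝ E]
    [FiniteDimensional ℝ E] (I : Type) [Fintype I] : Type where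
  R : Set E
  finite : R.Finite
  zero_not_mem : (0 : E) ∉ R
  spans : Submodule.span ℝ R = ⊤
  neg_mem : ∀ α ∈ R, -α ∈ R
  reduced : ∀ α ∈ R, ∀ r : ℝ, r • α ∈ R → r = 1 ∨ r = -1
  pair : E → E → ℤ
  pair_def : ∀ α ∈ R, ∀ β ∈ R, (pair α β : ℝ) * ⟪α, α⟫ = 2 * ⟪α, β⟫
  reflect_mem : ∀ α ∈ R, ∀ β ∈ R, β - (pair α β : ℝ) • α ∈ R
  irreducible : ∀ R₁ R₂ : Set E, R = R₁ ∪ R₂ →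
    (∀ α ∈ R₁, ∀ β ∈ R₂, ⟪α, β⟫ = 0) → R₁ = ∅ ∨ R₂ = ∅
  simple : I → E
  simple_mem : ∀ i, simple i ∈ R
  simple_indep : LinearIndependent ℝ simple
  simple_gen : ∀ α ∈ R,
    (∃ c : I → ℕ, α = ∑ i, (c i : ℝ) • simple i) ∨
    (∃ c : I → ℕ, α = -(∑ i, (c i : ℝ) • simple i))
  p : I → E → ℕ
  q : I → E → ℕ
  p_mem : ∀ i, ∀ α ∈ R, (∀ r : ℝ, α ≠ r • simple i) →
    ∀ k : ℕ, k ≤ p i α → α + (k : ℝ) • simple i ∈ R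
  p_max : ∀ i, ∀ α ∈ R, (∀ r : ℝ, α ≠ r • simple i) →
    α + ((p i α : ℝ) + 1) • simple i ∉ R
  q_mem : ∀ i, ∀ α ∈ R, (∀ r : ℝ, α ≠ r • simple i) →
    ∀ k : ℕ, k ≤ q i α → α - (k : ℝ) • simple i ∈ R
  q_max : ∀ i, ∀ α ∈ R, (∀ r : ℝ, α ≠ r • simple i) →
    α - ((q i α : ℝ) + 1) • simple i ∉ R

noncomputable section

variable {E : Type} [NormedAddCommGroup E] [InnerProductSpace ℝ E]
  [FiniteDimensional ℝ E] {I : Type} [Fintype I]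

/-- The `ℚ`-vector space `V₁` with basis `{X_α : α ∈ R} ∪ {t_i : i ∈ I}`. -/
abbrev V1 (D : RootSystemData E I) : Type := ({x : E // x ∈ D.R} ⊕ I) →₀ ℚ

/-- The basis vector `X_α` of `V₁`, for a root `α`. -/
def X1 (D : RootSystemData E I) (a : {x : E // x ∈ D.R}) : V1 D :=
  Finsupp.single (Sum.inl a) 1

/-- The basis vector `t_j` of `V₁`, for `j ∈ I`. -/
def t1 (D : RootSystemData E I) (j : I) : V1 D :=
  Finsupp.single (Sum.inr j) 1

open Classical in
/-- The operator `e_i` on `V₁`: `e_i X_α = (q_{i,α}+1) X_{α+αᵢ}` if `α+αᵢ ∈ R`,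
`e_i X_{-αᵢ} = tᵢ`, `e_i X_α = 0` otherwise, and `e_i t_j = |⟨αⱼ∨,αᵢ⟩| X_{αᵢ}`. -/
def eop (D : RootSystemData E I) (i : I) : V1 D →ₗ[ℚ] V1 D :=
  Finsupp.lift (V1 D) ℚ _ fun b =>
    match b with
    | Sum.inl a =>
        if h : (a : E) + D.simple i ∈ D.R then
          ((D.q i (a : E) : ℚ) + 1) • X1 D ⟨(a : E) + D.simple i, h⟩
        else if (a : E) = -(D.simple i) then t1 D i
        else 0
    | Sum.inr j =>
        ((|D.pair (D.simple j) (D.simple i)| : ℤ) : ℚ) •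
          X1 D ⟨D.simple i, D.simple_mem i⟩

open Classical in
/-- The operator `f_i` on `V₁`: `f_i X_α = (p_{i,α}+1) X_{α-αᵢ}` if `α-αᵢ ∈ R`,
`f_i X_{αᵢ} = tᵢ`, `f_i X_α = 0` otherwise, and `f_i t_j = |⟨αⱼ∨,αᵢ⟩| X_{-αᵢ}`. -/
def fop (D : RootSystemData E I) (i : I) : V1 D →ₗ[ℚ] V1 D :=
  Finsupp.lift (V1 D) ℚ _ fun b =>
    match b with
    | Sum.inl a =>
        if h : (a : E) - D.simple i ∈ D.R then
          ((D.p i (a : E) : ℚ) + 1) • X1 D ⟨(a : E) - D.simple i, h⟩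
        else if (a : E) = D.simple i then t1 D i
        else 0
    | Sum.inr j =>
        ((|D.pair (D.simple j) (D.simple i)| : ℤ) : ℚ) •
          X1 D ⟨-(D.simple i), D.neg_mem (D.simple i) (D.simple_mem i)⟩

/-!
On `X_α` with `α` not proportional to `αᵢ`, `e_i` acts as a shift `X_α ↦ c X_{α+αᵢ}`, so
`e_iᵏ X_α` is a multiple of `X_{α+kαᵢ}`. The `αᵢ`-string through such a root has at most four
roots: along it the Cartan integer `⟨αᵢ∨, ·⟩` grows by `2` per step, and it lies in `[-3, 3]`
by the strict Cauchy–Schwarz inequality, so `α + 4αᵢ` is never a root. The remaining basis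
vectors form the chain `X_{-αᵢ} ↦ tᵢ ↦ X_{αᵢ} ↦ 0` (and `t_j ↦ X_{αᵢ}`). The operator `f_i`
behaves in the same way with `-αᵢ` in place of `αᵢ`.
-/

theorem real_inner_mul_inner_self_lt_of_notMem_span {F : Type*} [NormedAddCommGroup F]
    [InnerProductSpace ℝ F] {x y : F} (hx : x ≠ 0) (hy : y ∉ ℝ ∙ x) :
    ⟪x, y⟫ * ⟪x, y⟫ < ⟪x, x⟫ * ⟪y, y⟫ := by
  have hne : |⟪x, y⟫| ≠ ‖x‖ * ‖y‖ := fun h => by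
    rcases ((norm_inner_eq_norm_tfae ℝ x y).out 0 3).1 (by rwa [Real.norm_eq_abs]) with h0 | hmem
    exacts [hx h0, hy hmem]
  have hlt : |⟪x, y⟫| < ‖x‖ * ‖y‖ := (abs_real_inner_le_norm x y).lt_of_ne hne
  rw [real_inner_self_eq_norm_mul_norm, real_inner_self_eq_norm_mul_norm, ← abs_mul_abs_self]
  nlinarith [abs_nonneg ⟪x, y⟫]

theorem add_smul_notMem_span_singleton {R M : Type*} [Ring R] [AddCommGroup M] [Module R M]
    {x v : M} (r : R) (hx : x ∉ R ∙ v) : x + r • v ∉ R ∙ v := by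
  rwa [Submodule.add_mem_iff_left _ (Submodule.smul_mem _ r (Submodule.mem_span_singleton_self v))]

namespace RootSystemData

variable (D : RootSystemData E I)

theorem ne_zero_of_mem {α : E} (hα : α ∈ D.R) : α ≠ 0 :=
  fun h => D.zero_not_mem (h ▸ hα)

theorem ne_neg_of_mem {α : E} (hα : α ∈ D.R) : α ≠ -α := fun h => D.ne_zero_of_mem hα <| by
  have h2 : (2 : ℝ) • α = 0 := by rw [two_smul]; nth_rewrite 2 [h]; exact add_neg_cancel α
  exact (smul_eq_zero.1 h2).resolve_left two_ne_zero

theorem eq_or_eq_neg_of_mem_span {α β : E} (hα : α ∈ D.R) (hβ : β ∈ D.R) (h : α ∈ ℝ ∙ β) :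
    α = β ∨ α = -β := by
  obtain ⟨r, rfl⟩ := Submodule.mem_span_singleton.1 h
  rcases D.reduced β hβ r hα with rfl | rfl
  · exact .inl (one_smul ℝ β)
  · exact .inr (neg_one_smul ℝ β)

theorem add_self_notMem {β : E} (hβ : β ∈ D.R) : β + β ∉ D.R := fun h => by
  rw [← two_smul ℝ] at h
  rcases D.reduced β hβ 2 h with h2 | h2 <;> norm_num at h2

theorem abs_pair_le_three {β γ : E} (hβ : β ∈ D.R) (hγ : γ ∈ D.R) (hγβ : γ ∉ ℝ ∙ β) :
    |D.pair β γ| ≤ 3 := by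
  set a := D.pair β γ
  set b := D.pair γ β
  have ha : (a : ℝ) * ⟪β, β⟫ = 2 * ⟪β, γ⟫ := D.pair_def β hβ γ hγ
  have hb : (b : ℝ) * ⟪γ, γ⟫ = 2 * ⟪β, γ⟫ := by
    rw [D.pair_def γ hγ β hβ, real_inner_comm]
  have hβpos : 0 < ⟪β, β⟫ := real_inner_self_pos.2 (D.ne_zero_of_mem hβ)
  have hγpos : 0 < ⟪γ, γ⟫ := real_inner_self_pos.2 (D.ne_zero_of_mem hγ)
  have hcs := real_inner_mul_inner_self_lt_of_notMem_span (D.ne_zero_of_mem hβ) hγβ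
  have hprod : (a * b : ℝ) * (⟪β, β⟫ * ⟪γ, γ⟫) = 4 * (⟪β, γ⟫ * ⟪β, γ⟫) := by
    linear_combination (b * ⟪γ, γ⟫) * ha + (2 * ⟪β, γ⟫) * hb
  have hab_nonneg : 0 ≤ a * b := by
    have : (0 : ℝ) ≤ a * b := nonneg_of_mul_nonneg_left
      (by rw [hprod]; exact mul_nonneg zero_le_four (mul_self_nonneg _)) (mul_pos hβpos hγpos)
    exact_mod_cast this
  have hab_lt : a * b < 4 := by
    have : (a * b : ℝ) < 4 := lt_of_mul_lt_mul_right (by rw [hprod]; linarith)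
      (mul_pos hβpos hγpos).le
    exact_mod_cast this
  rcases eq_or_ne b 0 with hb0 | hb0
  · have hinner : ⟪β, γ⟫ = 0 := by
      rw [hb0, Int.cast_zero, zero_mul] at hb
      linarith
    have : (a : ℝ) = 0 := by
      rw [hinner, mul_zero] at ha
      exact (mul_eq_zero.1 ha).resolve_right hβpos.ne'
    simp [show a = 0 by exact_mod_cast this]
  · calc |a| ≤ |a| * |b| := le_mul_of_one_le_right (abs_nonneg a) (Int.one_le_abs hb0)
      _ = a * b := by rw [← abs_mul, abs_of_nonneg hab_nonneg]
      _ ≤ 3 := by omega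

theorem add_four_smul_notMem {α β : E} (hα : α ∈ D.R) (hβ : β ∈ D.R) (hαβ : α ∉ ℝ ∙ β) :
    α + (4 : ℝ) • β ∉ D.R := fun h => by
  have hpair : (D.pair β (α + (4 : ℝ) • β) : ℝ) = D.pair β α + 8 := by
    have hβpos : 0 < ⟪β, β⟫ := real_inner_self_pos.2 (D.ne_zero_of_mem hβ)
    refine mul_right_cancel₀ hβpos.ne' ?_
    rw [D.pair_def β hβ _ h, inner_add_right, real_inner_smul_right, add_mul,
      D.pair_def β hβ α hα]
    ring
  have h₀ := abs_le.1 (D.abs_pair_le_three hβ hα hαβ)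
  have h₄ := abs_le.1 (D.abs_pair_le_three hβ h (add_smul_notMem_span_singleton 4 hαβ))
  have : D.pair β (α + (4 : ℝ) • β) = D.pair β α + 8 := by exact_mod_cast hpair
  omega

end RootSystemData

/-- The line `ℚ X_β` in `V₁` if `β` is a root, and `0` otherwise. -/
def rootSpan (D : RootSystemData E I) (β : E) : Submodule ℚ (V1 D) :=
  Submodule.span ℚ (X1 D '' {a | (a : E) = β})

section rootSpan

variable {D : RootSystemData E I}

theorem rootSpan_eq_bot {β : E} (hβ : β ∉ D.R) : rootSpan D β = ⊥ := by
  rw [rootSpan, Submodule.span_eq_bot]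
  rintro _ ⟨a, rfl, -⟩
  exact absurd a.2 hβ

theorem X1_mem_rootSpan {a : {x : E // x ∈ D.R}} {β : E} (h : (a : E) = β) :
    X1 D a ∈ rootSpan D β :=
  Submodule.subset_span ⟨a, h, rfl⟩

variable {T : V1 D →ₗ[ℚ] V1 D} {v : E}
  (hT : ∀ a : {x : E // x ∈ D.R}, (a : E) ∉ ℝ ∙ v → T (X1 D a) ∈ rootSpan D (a + v))
include hT

theorem rootSpan_le_comap {β : E} (hβ : β ∉ ℝ ∙ v) :
    rootSpan D β ≤ (rootSpan D (β + v)).comap T := by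
  refine Submodule.span_le.2 ?_
  rintro _ ⟨a, rfl, rfl⟩
  exact hT a hβ

theorem pow_apply_X1_mem_rootSpan {a : {x : E // x ∈ D.R}} (ha : (a : E) ∉ ℝ ∙ v) (k : ℕ) :
    (T ^ k) (X1 D a) ∈ rootSpan D (a + (k : ℝ) • v) := by
  induction k with
  | zero => exact X1_mem_rootSpan (by simp)
  | succ k ih =>
    rw [pow_succ', Module.End.mul_apply, Nat.cast_succ, add_smul, one_smul, ← add_assoc]
    exact rootSpan_le_comap hT (add_smul_notMem_span_singleton _ ha) ih

theorem pow_four_apply_X1_eq_zero (hv : v ∈ D.R) {a : {x : E // x ∈ D.R}}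
    (ha : (a : E) ∉ ℝ ∙ v) : (T ^ 4) (X1 D a) = 0 := by
  simpa [rootSpan_eq_bot (D.add_four_smul_notMem a.2 hv ha)] using
    pow_apply_X1_mem_rootSpan hT ha 4

end rootSpan

section operators

variable (D : RootSystemData E I) (i : I)

open Classical in
theorem eop_X1 (a : {x : E // x ∈ D.R}) :
    eop D i (X1 D a) =
      if h : (a : E) + D.simple i ∈ D.R then
        ((D.q i (a : E) : ℚ) + 1) • X1 D ⟨(a : E) + D.simple i, h⟩
      else if (a : E) = -(D.simple i) then t1 D i
      else 0 := by
  simp [eop, X1]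

theorem eop_t1 (j : I) :
    eop D i (t1 D j) = ((|D.pair (D.simple j) (D.simple i)| : ℤ) : ℚ) •
      X1 D ⟨D.simple i, D.simple_mem i⟩ := by
  simp [eop, t1]

open Classical in
theorem fop_X1 (a : {x : E // x ∈ D.R}) :
    fop D i (X1 D a) =
      if h : (a : E) - D.simple i ∈ D.R then
        ((D.p i (a : E) : ℚ) + 1) • X1 D ⟨(a : E) - D.simple i, h⟩
      else if (a : E) = D.simple i then t1 D i
      else 0 := by
  simp [fop, X1]

theorem fop_t1 (j : I) :
    fop D i (t1 D j) = ((|D.pair (D.simple j) (D.simple i)| : ℤ) : ℚ) •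
      X1 D ⟨-(D.simple i), D.neg_mem (D.simple i) (D.simple_mem i)⟩ := by
  simp [fop, t1]

theorem eop_X1_mem_rootSpan (a : {x : E // x ∈ D.R}) (ha : (a : E) ∉ ℝ ∙ D.simple i) :
    eop D i (X1 D a) ∈ rootSpan D (a + D.simple i) := by
  have hne : (a : E) ≠ -D.simple i := fun h =>
    ha (h ▸ Submodule.neg_mem _ (Submodule.mem_span_singleton_self _))
  rw [eop_X1]
  split_ifs with h
  · exact Submodule.smul_mem _ _ (X1_mem_rootSpan rfl)
  · exact Submodule.zero_mem _

theorem fop_X1_mem_rootSpan (a : {x : E // x ∈ D.R}) (ha : (a : E) ∉ ℝ ∙ -D.simple i) :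
    fop D i (X1 D a) ∈ rootSpan D (a + -D.simple i) := by
  have hne : (a : E) ≠ D.simple i := fun h =>
    ha (by rw [h, ← Submodule.neg_mem_iff]; exact Submodule.mem_span_singleton_self _)
  rw [fop_X1]
  split_ifs with h
  · exact Submodule.smul_mem _ _ (X1_mem_rootSpan (sub_eq_add_neg _ _))
  · exact Submodule.zero_mem _

theorem eop_X1_simple : eop D i (X1 D ⟨D.simple i, D.simple_mem i⟩) = 0 := by
  rw [eop_X1, dif_neg (D.add_self_notMem (D.simple_mem i)),
    if_neg (D.ne_neg_of_mem (D.simple_mem i))]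

theorem fop_X1_neg_simple :
    fop D i (X1 D ⟨-D.simple i, D.neg_mem _ (D.simple_mem i)⟩) = 0 := by
  rw [fop_X1, sub_eq_add_neg, dif_neg (D.add_self_notMem (D.neg_mem _ (D.simple_mem i))),
    if_neg (D.ne_neg_of_mem (D.simple_mem i)).symm]

theorem eop_X1_neg_simple :
    eop D i (X1 D ⟨-D.simple i, D.neg_mem _ (D.simple_mem i)⟩) = t1 D i := by
  rw [eop_X1, neg_add_cancel, dif_neg D.zero_not_mem, if_pos rfl]

theorem fop_X1_simple : fop D i (X1 D ⟨D.simple i, D.simple_mem i⟩) = t1 D i := by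
  rw [fop_X1, sub_self, dif_neg D.zero_not_mem, if_pos rfl]

theorem eop_pow_four : eop D i ^ 4 = 0 := by
  refine Finsupp.basisSingleOne.ext fun b => ?_
  rcases b with a | j
  · change (eop D i ^ 4) (X1 D a) = 0
    by_cases ha : (a : E) ∈ ℝ ∙ D.simple i
    · rcases D.eq_or_eq_neg_of_mem_span a.2 (D.simple_mem i) ha with h | h
      · obtain rfl : a = ⟨_, D.simple_mem i⟩ := Subtype.ext h
        simp [pow_succ, eop_X1_simple]
      · obtain rfl : a = ⟨_, D.neg_mem _ (D.simple_mem i)⟩ := Subtype.ext h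
        simp [pow_succ, eop_X1_neg_simple, eop_t1, eop_X1_simple]
    · exact pow_four_apply_X1_eq_zero (eop_X1_mem_rootSpan D i) (D.simple_mem i) ha
  · change (eop D i ^ 4) (t1 D j) = 0
    simp [pow_succ, eop_t1, eop_X1_simple]

theorem fop_pow_four : fop D i ^ 4 = 0 := by
  refine Finsupp.basisSingleOne.ext fun b => ?_
  rcases b with a | j
  · change (fop D i ^ 4) (X1 D a) = 0
    have hs := D.neg_mem _ (D.simple_mem i)
    by_cases ha : (a : E) ∈ ℝ ∙ -D.simple i
    · rcases D.eq_or_eq_neg_of_mem_span a.2 hs ha with h | h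
      · obtain rfl : a = ⟨_, hs⟩ := Subtype.ext h
        simp [pow_succ, fop_X1_neg_simple]
      · obtain rfl : a = ⟨_, D.simple_mem i⟩ := Subtype.ext (h.trans (neg_neg _))
        simp [pow_succ, fop_X1_simple, fop_t1, fop_X1_neg_simple]
    · exact pow_four_apply_X1_eq_zero (fop_X1_mem_rootSpan D i) hs ha
  · change (fop D i ^ 4) (t1 D j) = 0
    simp [pow_succ, fop_t1, fop_X1_neg_simple]

end operators

/-- For every `i ∈ I`, the operators `e_i`, `f_i` on `V₁` satisfy
`e_i⁴ = 0` and `f_i⁴ = 0`. -/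
theorem stmt16 {E : Type} [NormedAddCommGroup E] [InnerProductSpace ℝ E]
    [FiniteDimensional ℝ E] {I : Type} [Fintype I]
    (D : RootSystemData E I) (i : I) :
    eop D i ^ 4 = 0 ∧ fop D i ^ 4 = 0 :=
  ⟨eop_pow_four D i, fop_pow_four D i⟩
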